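/- Under hypotheses (F1) and (F2), for every λ > 0 the limit of (∫₀^t h_λ(τ) dτ) / t² as t → +∞ equals +∞; consequently there exists T > 0 such that ∫₀^T h_λ(τ) dτ > (λ/2)·T². -/

import Mathlib

open Real Filter Topology

/-- The piecewise function `g` from the paper: `g(t) = sqrt(1 - κ t^2)` for `|t| < sqrt(1/(3κ))`,
and `g(t) = 1/(3 sqrt(2κ) |t|) + sqrt(1/6)` for `|t| ≥ sqrt(1/(3κ))`; in particular `g` is even. -/
noncomputable def gfun (κ : ℝ) (t : ℝ) : ℝ :=
  if |t| < Real.sqrt (1 / (3 * κ)) then Real.sqrt (1 - κ * t ^ 2)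
  else 1 / (3 * Real.sqrt (2 * κ) * |t|) + Real.sqrt (1 / 6)

/-- `G(t) = ∫ s in [0,t], g(s) ds`. -/
noncomputable def Gfun (κ : ℝ) (t : ℝ) : ℝ := ∫ s in (0:ℝ)..t, gfun κ s

/-- `G⁻¹`, the inverse function of `G`. -/
noncomputable def Ginv (κ : ℝ) : ℝ → ℝ := Function.invFun (Gfun κ)

/-- The transformed nonlinearity `h_λ(s) = f(G⁻¹ s)/g(G⁻¹ s) - λ G⁻¹ s / g(G⁻¹ s) + λ s`. -/
noncomputable def hlam (κ : ℝ) (f : ℝ → ℝ) (lam : ℝ) (s : ℝ) : ℝ :=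
  f (Ginv κ s) / gfun κ (Ginv κ s) - lam * Ginv κ s / gfun κ (Ginv κ s) + lam * s

/-!
Since `√(1/6) ≤ g ≤ 1`, `G` is an increasing bijection of `ℝ` with `s ≤ G⁻¹ s` for `s ≥ 0`.
As `f'(t) ∼ μ₂ (β - 1) t^(β-2) → ∞`, `f` grows faster than any linear function. Writing
`h_λ(s) = (f u - λ u) / g u + λ s` with `u = G⁻¹ s ≥ s`, the bound `g ≤ 1` then gives
`h_λ(s) ≥ M s` for large `s`, for every `M`; integrating, `∫₀ᵗ h_λ ≥ M t² / 2 - O(1)`.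
-/

open Set MeasureTheory

theorem tendsto_atTop_of_tendsto_div_rpow {u : ℝ → ℝ} {p L : ℝ} (hp : 0 < p) (hL : 0 < L)
    (hu : Tendsto (fun t => u t / t ^ p) atTop (𝓝 L)) : Tendsto u atTop atTop := by
  refine (hu.pos_mul_atTop hL (tendsto_rpow_atTop hp)).congr' ?_
  filter_upwards [eventually_gt_atTop 0] with t ht
  exact div_mul_cancel₀ _ (Real.rpow_pos_of_pos ht p).ne'

theorem eventually_mul_le_of_tendsto_deriv_atTop {f : ℝ → ℝ} {a : ℝ}
    (hf : ContinuousOn f (Ici a)) (hf' : DifferentiableOn ℝ f (Ioi a))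
    (hderiv : Tendsto (deriv f) atTop atTop) (M : ℝ) : ∀ᶠ t in atTop, M * t ≤ f t := by
  obtain ⟨t₀, ht₀⟩ :=
    eventually_atTop.1 ((tendsto_atTop.1 hderiv (M + 1)).and (eventually_ge_atTop a))
  have hat₀ : a ≤ t₀ := (ht₀ t₀ le_rfl).2
  have hslope : ∀ t, t₀ ≤ t → (M + 1) * (t - t₀) ≤ f t - f t₀ := fun t ht => by
    refine (convex_Ici t₀).mul_sub_le_image_sub_of_le_deriv (hf.mono (Ici_subset_Ici.2 hat₀))
      ?_ ?_ t₀ self_mem_Ici t ht ht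
    · rw [interior_Ici]
      exact hf'.mono (Ioi_subset_Ioi hat₀)
    · rw [interior_Ici]
      exact fun x hx => (ht₀ x hx.le).1
  filter_upwards [eventually_ge_atTop t₀, eventually_ge_atTop ((M + 1) * t₀ - f t₀)] with t ht ht'
  linarith [hslope t ht]

theorem tendsto_integral_div_sq_atTop {h : ℝ → ℝ}
    (hint : ∀ b, 0 ≤ b → IntervalIntegrable h volume 0 b)
    (hgrow : ∀ M, ∀ᶠ s in atTop, M * s ≤ h s) :
    Tendsto (fun t => (∫ τ in 0..t, h τ) / t ^ 2) atTop atTop := by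
  refine tendsto_atTop.2 fun B => ?_
  obtain ⟨a, ha⟩ := eventually_atTop.1 ((hgrow (2 * (B + 1))).and (eventually_ge_atTop 0))
  have ha0 : 0 ≤ a := (ha a le_rfl).2
  have hlower : ∀ t, a ≤ t →
      (∫ τ in 0..a, h τ) + (B + 1) * (t ^ 2 - a ^ 2) ≤ ∫ τ in 0..t, h τ := fun t hat => by
    have hint_at : IntervalIntegrable h volume a t :=
      (hint a ha0).symm.trans (hint t (ha0.trans hat))
    have hmono : ∫ τ in a..t, 2 * (B + 1) * τ ≤ ∫ τ in a..t, h τ :=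
      intervalIntegral.integral_mono_on hat ((continuous_const_mul _).intervalIntegrable a t)
        hint_at fun τ hτ => (ha τ hτ.1).1
    rw [intervalIntegral.integral_const_mul, integral_id] at hmono
    rw [← intervalIntegral.integral_add_adjacent_intervals (hint a ha0) hint_at]
    linarith
  filter_upwards [eventually_ge_atTop a, eventually_gt_atTop 0,
    (tendsto_pow_atTop two_ne_zero).eventually_ge_atTop ((B + 1) * a ^ 2 - ∫ τ in 0..a, h τ)]
    with t hat ht ht2
  rw [le_div_iff₀ (by positivity)]
  linarith [hlower t hat]

section

variable {κ : ℝ}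

theorem gfun_le_one (hκ : 0 < κ) (t : ℝ) : gfun κ t ≤ 1 := by
  unfold gfun
  split_ifs with ht
  · exact Real.sqrt_le_one.2 (by nlinarith [sq_nonneg t])
  · have hsq : 1 / (3 * κ) ≤ t ^ 2 := by
      rw [← sq_abs t, ← Real.sqrt_le_left (abs_nonneg t)]
      exact not_lt.1 ht
    have hκt : 1 / 3 ≤ κ * t ^ 2 := by
      rw [div_le_iff₀ (by positivity)] at hsq; linarith
    have hden : 2 ≤ 3 * Real.sqrt (2 * κ) * |t| := by
      have hsq' : (Real.sqrt (2 * κ) * |t|) ^ 2 = 2 * (κ * t ^ 2) := by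
        rw [mul_pow, Real.sq_sqrt (by positivity), sq_abs]; ring
      nlinarith [mul_nonneg (Real.sqrt_nonneg (2 * κ)) (abs_nonneg t)]
    have hc : Real.sqrt (1 / 6) ≤ 1 / 2 := (Real.sqrt_le_left (by norm_num)).2 (by norm_num)
    have hfrac : 1 / (3 * Real.sqrt (2 * κ) * |t|) ≤ 1 / 2 :=
      one_div_le_one_div_of_le (by norm_num) hden
    linarith

theorem sqrt_one_sixth_le_gfun (hκ : 0 < κ) (t : ℝ) : Real.sqrt (1 / 6) ≤ gfun κ t := by
  unfold gfun
  split_ifs with ht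
  · refine Real.sqrt_le_sqrt ?_
    have hsq : t ^ 2 < 1 / (3 * κ) := by
      rw [← sq_abs t, ← Real.lt_sqrt (abs_nonneg t)]
      exact ht
    have : κ * t ^ 2 < 1 / 3 := by
      rw [lt_div_iff₀ (by positivity)] at hsq; linarith
    linarith
  · exact le_add_of_nonneg_left (by positivity)

theorem gfun_pos (hκ : 0 < κ) (t : ℝ) : 0 < gfun κ t :=
  (Real.sqrt_pos.2 (by norm_num)).trans_le (sqrt_one_sixth_le_gfun hκ t)

theorem measurable_gfun : Measurable (gfun κ) := by
  unfold gfun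
  exact Measurable.ite (measurableSet_lt measurable_abs measurable_const)
    (Real.continuous_sqrt.measurable.comp (by fun_prop))
    ((measurable_const.div (measurable_const.mul measurable_abs)).add measurable_const)

theorem intervalIntegrable_gfun (hκ : 0 < κ) (a b : ℝ) :
    IntervalIntegrable (gfun κ) volume a b := by
  refine intervalIntegrable_const (c := (1 : ℝ)).mono_fun' measurable_gfun.aestronglyMeasurable
    (Eventually.of_forall fun t => ?_)
  change ‖gfun κ t‖ ≤ 1
  rw [Real.norm_of_nonneg (gfun_pos hκ t).le]
  exact gfun_le_one hκ t

theorem Gfun_sub (hκ : 0 < κ) (a b : ℝ) : Gfun κ b - Gfun κ a = ∫ s in a..b, gfun κ s :=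
  intervalIntegral.integral_interval_sub_left (intervalIntegrable_gfun hκ 0 b)
    (intervalIntegrable_gfun hκ 0 a)

theorem Gfun_sub_le (hκ : 0 < κ) {a b : ℝ} (hab : a ≤ b) : Gfun κ b - Gfun κ a ≤ b - a := by
  rw [Gfun_sub hκ]
  calc (∫ s in a..b, gfun κ s) ≤ ∫ _ in a..b, (1 : ℝ) :=
        intervalIntegral.integral_mono_on hab (intervalIntegrable_gfun hκ a b)
          intervalIntegrable_const fun t _ => gfun_le_one hκ t
    _ = b - a := by simp

theorem mul_sub_le_Gfun_sub (hκ : 0 < κ) {a b : ℝ} (hab : a ≤ b) :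
    Real.sqrt (1 / 6) * (b - a) ≤ Gfun κ b - Gfun κ a := by
  rw [Gfun_sub hκ]
  calc Real.sqrt (1 / 6) * (b - a) = ∫ _ in a..b, Real.sqrt (1 / 6) := by simp [mul_comm]
    _ ≤ ∫ s in a..b, gfun κ s :=
        intervalIntegral.integral_mono_on hab intervalIntegrable_const
          (intervalIntegrable_gfun hκ a b) fun t _ => sqrt_one_sixth_le_gfun hκ t

theorem Gfun_zero : Gfun κ 0 = 0 := intervalIntegral.integral_same

theorem Gfun_strictMono (hκ : 0 < κ) : StrictMono (Gfun κ) := fun a b hab => by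
  have hc : 0 < Real.sqrt (1 / 6) := Real.sqrt_pos.2 (by norm_num)
  linarith [mul_sub_le_Gfun_sub hκ hab.le, mul_pos hc (sub_pos.2 hab)]

theorem continuous_Gfun (hκ : 0 < κ) : Continuous (Gfun κ) :=
  intervalIntegral.continuous_primitive (intervalIntegrable_gfun hκ) 0

theorem Gfun_surjective (hκ : 0 < κ) : Function.Surjective (Gfun κ) := by
  have hc : 0 < Real.sqrt (1 / 6) := Real.sqrt_pos.2 (by norm_num)
  refine (continuous_Gfun hκ).surjective ?_ ?_
  · refine tendsto_atTop_mono' _ ?_ (tendsto_id.const_mul_atTop hc)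
    filter_upwards [eventually_ge_atTop 0] with t ht
    simpa [Gfun_zero] using mul_sub_le_Gfun_sub hκ ht
  · refine tendsto_atBot_mono' _ ?_ (tendsto_id.const_mul_atBot hc)
    filter_upwards [eventually_le_atBot 0] with t ht
    simpa [Gfun_zero] using mul_sub_le_Gfun_sub hκ ht

theorem Gfun_Ginv (hκ : 0 < κ) (s : ℝ) : Gfun κ (Ginv κ s) = s :=
  Function.rightInverse_invFun (Gfun_surjective hκ) s

theorem Ginv_Gfun (hκ : 0 < κ) (t : ℝ) : Ginv κ (Gfun κ t) = t :=
  Function.leftInverse_invFun (Gfun_strictMono hκ).injective t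

theorem Ginv_monotone (hκ : 0 < κ) : Monotone (Ginv κ) := fun a b hab => by
  rwa [← (Gfun_strictMono hκ).le_iff_le, Gfun_Ginv hκ, Gfun_Ginv hκ]

theorem continuous_Ginv (hκ : 0 < κ) : Continuous (Ginv κ) :=
  (Ginv_monotone hκ).continuous_of_surjective fun t => ⟨Gfun κ t, Ginv_Gfun hκ t⟩

theorem le_Ginv (hκ : 0 < κ) {s : ℝ} (hs : 0 ≤ s) : s ≤ Ginv κ s := by
  rw [← (Gfun_strictMono hκ).le_iff_le, Gfun_Ginv hκ]
  simpa [Gfun_zero] using Gfun_sub_le hκ hs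

theorem hlam_apply (f : ℝ → ℝ) (lam s : ℝ) :
    hlam κ f lam s = (f (Ginv κ s) - lam * Ginv κ s) / gfun κ (Ginv κ s) + lam * s := by
  unfold hlam
  ring

theorem intervalIntegrable_hlam (hκ : 0 < κ) {f : ℝ → ℝ} (hf : ContinuousOn f (Ici 0))
    (lam : ℝ) {b : ℝ} (hb : 0 ≤ b) : IntervalIntegrable (hlam κ f lam) volume 0 b := by
  have hnum : IntervalIntegrable (fun s => f (Ginv κ s) - lam * Ginv κ s) volume 0 b := by
    refine ContinuousOn.intervalIntegrable ?_
    refine (hf.comp (continuous_Ginv hκ).continuousOn fun s hs => ?_).sub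
      (continuous_const.mul (continuous_Ginv hκ)).continuousOn
    rw [uIcc_of_le hb] at hs
    exact hs.1.trans (le_Ginv hκ hs.1)
  have hquot : IntervalIntegrable
      (fun s => (f (Ginv κ s) - lam * Ginv κ s) * (gfun κ (Ginv κ s))⁻¹) volume 0 b := by
    rw [intervalIntegrable_iff] at hnum ⊢
    refine hnum.mul_bdd (c := (Real.sqrt (1 / 6))⁻¹)
      (measurable_gfun.comp (continuous_Ginv hκ).measurable).inv.aestronglyMeasurable
      (Eventually.of_forall fun s => ?_)
    rw [norm_inv, Real.norm_of_nonneg (gfun_pos hκ _).le]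
    exact inv_anti₀ (Real.sqrt_pos.2 (by norm_num)) (sqrt_one_sixth_le_gfun hκ _)
  convert hquot.add ((continuous_const_mul lam).intervalIntegrable 0 b) using 1
  funext s
  rw [hlam_apply, div_eq_mul_inv]

theorem eventually_mul_le_hlam (hκ : 0 < κ) {f : ℝ → ℝ}
    (hf : ∀ M, ∀ᶠ t in atTop, M * t ≤ f t) (lam M : ℝ) :
    ∀ᶠ s in atTop, M * s ≤ hlam κ f lam s := by
  set K := max M lam
  have hGinv : Tendsto (Ginv κ) atTop atTop :=
    tendsto_atTop_mono' _ ((eventually_ge_atTop 0).mono fun s hs => le_Ginv hκ hs) tendsto_id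
  filter_upwards [hGinv.eventually (hf K), eventually_ge_atTop 0] with s hKf hs
  set u := Ginv κ s
  have hsu : s ≤ u := le_Ginv hκ hs
  have hKlam : 0 ≤ K - lam := sub_nonneg.2 (le_max_right _ _)
  have hnum : (K - lam) * u ≤ f u - lam * u := by linarith
  have hnum0 : 0 ≤ (K - lam) * u := mul_nonneg hKlam (hs.trans hsu)
  calc M * s ≤ K * s := mul_le_mul_of_nonneg_right (le_max_left _ _) hs
    _ = (K - lam) * s + lam * s := by ring
    _ ≤ (K - lam) * u + lam * s := by gcongr
    _ ≤ (f u - lam * u) / gfun κ u + lam * s := by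
        gcongr
        exact hnum.trans (le_div_self (hnum0.trans hnum) (gfun_pos hκ u) (gfun_le_one hκ u))
    _ = hlam κ f lam s := (hlam_apply f lam s).symm

end

theorem stmt_17_general (N : ℕ) (f : ℝ → ℝ)
    (hf1 : ContDiffOn ℝ 1 f (Set.Ici (0 : ℝ)))
    (β μ₂ : ℝ)
    (hβ : 2 < β ∧ β < 2 * N / (N - 2))
    (hμ₂ : 0 < μ₂)
    (hdinf : Tendsto (fun t : ℝ => deriv f t / t ^ (β - 2)) atTop
      (𝓝 (μ₂ * (β - 1))))
    (κ : ℝ) (hκ : 0 < κ) (lam : ℝ) :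
    Tendsto (fun t : ℝ => (∫ τ in (0:ℝ)..t, hlam κ f lam τ) / t ^ 2) atTop atTop ∧
      ∃ T : ℝ, 0 < T ∧ lam / 2 * T ^ 2 < ∫ τ in (0:ℝ)..T, hlam κ f lam τ := by
  have hderiv : Tendsto (deriv f) atTop atTop :=
    tendsto_atTop_of_tendsto_div_rpow (by linarith [hβ.1]) (by nlinarith [hβ.1]) hdinf
  have hgrow : ∀ M, ∀ᶠ t in atTop, M * t ≤ f t :=
    eventually_mul_le_of_tendsto_deriv_atTop hf1.continuousOn
      ((hf1.differentiableOn one_ne_zero).mono Ioi_subset_Ici_self) hderiv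
  have hlim := tendsto_integral_div_sq_atTop (fun b hb => intervalIntegrable_hlam hκ
    hf1.continuousOn lam hb) (eventually_mul_le_hlam hκ hgrow lam)
  refine ⟨hlim, ?_⟩
  obtain ⟨T, hT, hT0⟩ := ((tendsto_atTop.1 hlim (lam / 2 + 1)).and (eventually_gt_atTop 0)).exists
  refine ⟨T, hT0, ?_⟩
  rw [le_div_iff₀ (by positivity)] at hT
  nlinarith

/-- under (F1)-(F2), for every `λ > 0`,
`(∫ τ in [0,t], h_λ τ) / t² → +∞` as `t → +∞`; consequently there is `T > 0` with
`∫ τ in [0,T], h_λ τ > (λ/2) T²`. -/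
theorem stmt_17 (N : ℕ) (hN : 3 ≤ N) (f : ℝ → ℝ)
    (hf1 : ContDiffOn ℝ 1 f (Set.Ici (0 : ℝ))) (hf0 : f 0 = 0)
    (hfpos : ∀ s : ℝ, 0 < s → 0 < f s)
    (α β μ₁ μ₂ : ℝ)
    (hα : 2 < α ∧ α < 2 * N / (N - 2)) (hβ : 2 < β ∧ β < 2 * N / (N - 2))
    (hμ₁ : 0 < μ₁) (hμ₂ : 0 < μ₂)
    (hd0 : Tendsto (fun t : ℝ => deriv f t / t ^ (α - 2)) (𝓝[>] (0 : ℝ))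
      (𝓝 (μ₁ * (α - 1))))
    (hdinf : Tendsto (fun t : ℝ => deriv f t / t ^ (β - 2)) atTop
      (𝓝 (μ₂ * (β - 1))))
    (κ : ℝ) (hκ : 0 < κ) (lam : ℝ) (hlam_pos : 0 < lam) :
    Tendsto (fun t : ℝ => (∫ τ in (0:ℝ)..t, hlam κ f lam τ) / t ^ 2) atTop atTop ∧
      ∃ T : ℝ, 0 < T ∧ lam / 2 * T ^ 2 < ∫ τ in (0:ℝ)..T, hlam κ f lam τ :=
  stmt_17_general N f hf1 β μ₂ hβ hμ₂ hdinf κ hκ lam
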